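/- arXiv:2312.07321 — 7 statements merged into one kernel-verified Lean document; each statement's English description precedes it below -/
import Mathlib

section
/- For SDRs (A₁,B₁) and (A₂,B₂), the non-symmetric tensor product homotopy h₁⊗1 + (i₁p₁)⊗h₂ generally differs from its conjugate by the symmetry (1 2), which equals h₁⊗(i₂p₂) + 1⊗h₂; however, both are homotopies from (i₁p₁)⊗(i₂p₂) to the identity, so their average (1/2)(h₁⊗1 + (i₁p₁)⊗h₂ + h₁⊗(i₂p₂) + 1⊗h₂) also satisfies dh + hd = 1 − (i₁p₁)⊗(i₂p₂). -/
/-!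
With Koszul signs, the cross terms cancel in the graded commutator with the tensor differential:
for a map `F` of degree `-1` and a degree-`0` chain map `g` one gets `[d, F ⊗ g] = [d₁, F] ⊗ g`,
and symmetrically `[d, f ⊗ H] = f ⊗ [d₂, H]`. Hence
`[d, h₁ ⊗ 1 + i₁p₁ ⊗ h₂] = (1 - i₁p₁) ⊗ 1 + i₁p₁ ⊗ (1 - i₂p₂) = 1 - i₁p₁ ⊗ i₂p₂`, and likewise
`[d, h₁ ⊗ i₂p₂ + 1 ⊗ h₂] = (1 - i₁p₁) ⊗ i₂p₂ + 1 ⊗ (1 - i₂p₂)` is the same map. Since `[d, -]` is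
linear in the homotopy, the average of the two homotopies is again one.
-/

open TensorProduct

noncomputable section

/-- The identity of `V p` viewed as a map `V p →ₗ V q` along an equality of degrees. -/
def castLM {V : ℤ → Type} [∀ n, AddCommGroup (V n)] [∀ n, Module ℚ (V n)]
    {p q : ℤ} (h : p = q) : V p →ₗ[ℚ] V q := by subst h; exact LinearMap.id

/-- Degree-`n` part of the tensor product of two cochain complexes (of graded ℚ-modules):
`(V₁ ⊗ V₂)ⁿ = ⊕_{a+b=n} V₁ᵃ ⊗ V₂ᵇ`. -/
abbrev T2 (V₁ V₂ : ℤ → Type) [∀ n, AddCommGroup (V₁ n)] [∀ n, Module ℚ (V₁ n)]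
    [∀ n, AddCommGroup (V₂ n)] [∀ n, Module ℚ (V₂ n)] (n : ℤ) : Type :=
  DirectSum {p : ℤ × ℤ // p.1 + p.2 = n} (fun p => V₁ p.1.1 ⊗[ℚ] V₂ p.1.2)

section TOp

variable {V₁ V₂ W₁ W₂ : ℤ → Type}
  [∀ n, AddCommGroup (V₁ n)] [∀ n, Module ℚ (V₁ n)]
  [∀ n, AddCommGroup (V₂ n)] [∀ n, Module ℚ (V₂ n)]
  [∀ n, AddCommGroup (W₁ n)] [∀ n, Module ℚ (W₁ n)]
  [∀ n, AddCommGroup (W₂ n)] [∀ n, Module ℚ (W₂ n)]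

/-- The tensor product `F ⊗ G` of a map `F` of degree `k₁` and a map `G` of degree `k₂`, with
the Koszul sign convention `(F ⊗ G)(x ⊗ y) = (−1)^{|G||x|} F(x) ⊗ G(y)`. -/
def tOp (k₁ k₂ : ℤ) (F : ∀ a, V₁ a →ₗ[ℚ] W₁ (a + k₁)) (G : ∀ b, V₂ b →ₗ[ℚ] W₂ (b + k₂))
    (n : ℤ) : T2 V₁ V₂ n →ₗ[ℚ] T2 W₁ W₂ (n + (k₁ + k₂)) :=
  DirectSum.toModule ℚ _ _ (fun p =>
    ((-1 : ℚ) ^ (k₂ * p.1.1)) •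
      ((DirectSum.lof ℚ {q : ℤ × ℤ // q.1 + q.2 = n + (k₁ + k₂)}
          (fun q => W₁ q.1.1 ⊗[ℚ] W₂ q.1.2)
          ⟨(p.1.1 + k₁, p.1.2 + k₂), by have := p.2; dsimp at this ⊢; omega⟩).comp
        (TensorProduct.map (F p.1.1) (G p.1.2))))

/-- A degree-`0` map reindexed so that it has target degree `a + 0`. -/
def sh0 (f : ∀ a, V₁ a →ₗ[ℚ] W₁ a) (a : ℤ) : V₁ a →ₗ[ℚ] W₁ (a + 0) :=
  (castLM (show a = a + 0 by omega)).comp (f a)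

end TOp

section Statement

variable (A₁ A₂ B₁ B₂ : ℤ → Type)
  [∀ n, AddCommGroup (A₁ n)] [∀ n, Module ℚ (A₁ n)]
  [∀ n, AddCommGroup (A₂ n)] [∀ n, Module ℚ (A₂ n)]
  [∀ n, AddCommGroup (B₁ n)] [∀ n, Module ℚ (B₁ n)]
  [∀ n, AddCommGroup (B₂ n)] [∀ n, Module ℚ (B₂ n)]

/-- `i₁ ⊗ i₂` on the tensor product of complexes. -/
def iT (i₁ : ∀ n, A₁ n →ₗ[ℚ] B₁ n) (i₂ : ∀ n, A₂ n →ₗ[ℚ] B₂ n) (n : ℤ) :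
    T2 A₁ A₂ n →ₗ[ℚ] T2 B₁ B₂ n :=
  (castLM (V := fun m => T2 B₁ B₂ m) (show n + ((0 : ℤ) + 0) = n by omega)).comp
    (tOp 0 0 (sh0 i₁) (sh0 i₂) n)

/-- `p₁ ⊗ p₂` on the tensor product of complexes. -/
def pT (p₁ : ∀ n, B₁ n →ₗ[ℚ] A₁ n) (p₂ : ∀ n, B₂ n →ₗ[ℚ] A₂ n) (n : ℤ) :
    T2 B₁ B₂ n →ₗ[ℚ] T2 A₁ A₂ n :=
  (castLM (V := fun m => T2 A₁ A₂ m) (show n + ((0 : ℤ) + 0) = n by omega)).comp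
    (tOp 0 0 (sh0 p₁) (sh0 p₂) n)

/-- The differential `d ⊗ 1 + 1 ⊗ d` (with Koszul signs) on the tensor product. -/
def dT (d₁ : ∀ n, B₁ n →ₗ[ℚ] B₁ (n + 1)) (d₂ : ∀ n, B₂ n →ₗ[ℚ] B₂ (n + 1)) (n : ℤ) :
    T2 B₁ B₂ n →ₗ[ℚ] T2 B₁ B₂ (n + 1) :=
  (castLM (V := fun m => T2 B₁ B₂ m) (show n + ((1 : ℤ) + 0) = n + 1 by omega)).comp
    (tOp 1 0 d₁ (sh0 fun _ => LinearMap.id) n)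
  + (castLM (V := fun m => T2 B₁ B₂ m) (show n + ((0 : ℤ) + 1) = n + 1 by omega)).comp
    (tOp 0 1 (sh0 fun _ => LinearMap.id) d₂ n)

/-- The homotopy `h₁ ⊗ 1 + (i₁p₁) ⊗ h₂` on the tensor product. -/
def hT (i₁ : ∀ n, A₁ n →ₗ[ℚ] B₁ n) (p₁ : ∀ n, B₁ n →ₗ[ℚ] A₁ n)
    (h₁ : ∀ n, B₁ n →ₗ[ℚ] B₁ (n + (-1))) (h₂ : ∀ n, B₂ n →ₗ[ℚ] B₂ (n + (-1))) (n : ℤ) :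
    T2 B₁ B₂ n →ₗ[ℚ] T2 B₁ B₂ (n + (-1)) :=
  (castLM (V := fun m => T2 B₁ B₂ m) (show n + ((-1 : ℤ) + 0) = n + (-1) by omega)).comp
    (tOp (-1) 0 h₁ (sh0 fun _ => LinearMap.id) n)
  + (castLM (V := fun m => T2 B₁ B₂ m) (show n + ((0 : ℤ) + (-1)) = n + (-1) by omega)).comp
    (tOp 0 (-1) (sh0 fun a => (i₁ a).comp (p₁ a)) h₂ n)

/-- `(i₁p₁) ⊗ (i₂p₂)` on the tensor product. -/
def ipT (i₁ : ∀ n, A₁ n →ₗ[ℚ] B₁ n) (p₁ : ∀ n, B₁ n →ₗ[ℚ] A₁ n)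
    (i₂ : ∀ n, A₂ n →ₗ[ℚ] B₂ n) (p₂ : ∀ n, B₂ n →ₗ[ℚ] A₂ n) (n : ℤ) :
    T2 B₁ B₂ n →ₗ[ℚ] T2 B₁ B₂ n :=
  (castLM (V := fun m => T2 B₁ B₂ m) (show n + ((0 : ℤ) + 0) = n by omega)).comp
    (tOp 0 0 (sh0 fun a => (i₁ a).comp (p₁ a)) (sh0 fun b => (i₂ b).comp (p₂ b)) n)

/-- The homotopy `h₁ ⊗ (i₂p₂) + 1 ⊗ h₂`, the conjugate of `h₁ ⊗ 1 + (i₁p₁) ⊗ h₂` by the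
symmetry constraint `(1 2)`. -/
def hT' (i₂ : ∀ n, A₂ n →ₗ[ℚ] B₂ n) (p₂ : ∀ n, B₂ n →ₗ[ℚ] A₂ n)
    (h₁ : ∀ n, B₁ n →ₗ[ℚ] B₁ (n + (-1))) (h₂ : ∀ n, B₂ n →ₗ[ℚ] B₂ (n + (-1))) (n : ℤ) :
    T2 B₁ B₂ n →ₗ[ℚ] T2 B₁ B₂ (n + (-1)) :=
  (castLM (V := fun m => T2 B₁ B₂ m) (show n + ((-1 : ℤ) + 0) = n + (-1) by omega)).comp
    (tOp (-1) 0 h₁ (sh0 fun b => (i₂ b).comp (p₂ b)) n)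
  + (castLM (V := fun m => T2 B₁ B₂ m) (show n + ((0 : ℤ) + (-1)) = n + (-1) by omega)).comp
    (tOp 0 (-1) (sh0 fun _ => LinearMap.id) h₂ n)

section TensorCalculus

variable {V V₁ V₂ W₁ W₂ : ℤ → Type}
  [∀ n, AddCommGroup (V n)] [∀ n, Module ℚ (V n)]
  [∀ n, AddCommGroup (V₁ n)] [∀ n, Module ℚ (V₁ n)]
  [∀ n, AddCommGroup (V₂ n)] [∀ n, Module ℚ (V₂ n)]
  [∀ n, AddCommGroup (W₁ n)] [∀ n, Module ℚ (W₁ n)]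
  [∀ n, AddCommGroup (W₂ n)] [∀ n, Module ℚ (W₂ n)]

def T2.tmul {n : ℤ} (a b : ℤ) (hab : a + b = n) (x : V₁ a) (y : V₂ b) : T2 V₁ V₂ n :=
  DirectSum.lof ℚ _ (fun p : {p : ℤ × ℤ // p.1 + p.2 = n} => V₁ p.1.1 ⊗[ℚ] V₂ p.1.2)
    ⟨(a, b), hab⟩ (x ⊗ₜ y)

namespace T2

variable {n : ℤ} {a b : ℤ} {hab : a + b = n}

lemma tmul_add_left (x x' : V₁ a) (y : V₂ b) :
    T2.tmul a b hab (x + x') y = T2.tmul a b hab x y + T2.tmul a b hab x' y := by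
  simp [T2.tmul, add_tmul]

lemma tmul_add_right (x : V₁ a) (y y' : V₂ b) :
    T2.tmul a b hab x (y + y') = T2.tmul a b hab x y + T2.tmul a b hab x y' := by
  simp [T2.tmul, tmul_add]

lemma tmul_sub_left (x x' : V₁ a) (y : V₂ b) :
    T2.tmul a b hab (x - x') y = T2.tmul a b hab x y - T2.tmul a b hab x' y := by
  simp [T2.tmul, sub_tmul]

lemma tmul_sub_right (x : V₁ a) (y y' : V₂ b) :
    T2.tmul a b hab x (y - y') = T2.tmul a b hab x y - T2.tmul a b hab x y' := by
  simp [T2.tmul, tmul_sub]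

@[simp] lemma tmul_castLM_left {a' : ℤ} (e : a' = a) (x : V₁ a') (y : V₂ b) :
    T2.tmul a b hab (castLM e x) y = T2.tmul a' b (by omega) x y := by
  subst e; rfl

@[simp] lemma tmul_castLM_right {b' : ℤ} (e : b' = b) (x : V₁ a) (y : V₂ b') :
    T2.tmul a b hab x (castLM e y) = T2.tmul a b' (by omega) x y := by
  subst e; rfl

@[simp] lemma castLM_tmul {n' : ℤ} (e : n = n') (x : V₁ a) (y : V₂ b) :
    castLM (V := fun m => T2 V₁ V₂ m) e (T2.tmul a b hab x y) = T2.tmul a b (hab.trans e) x y := by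
  subst e; rfl

lemma hom_ext {M : Type} [AddCommGroup M] [Module ℚ M] {φ ψ : T2 V₁ V₂ n →ₗ[ℚ] M}
    (h : ∀ a b (hab : a + b = n) (x : V₁ a) (y : V₂ b),
      φ (T2.tmul a b hab x y) = ψ (T2.tmul a b hab x y)) : φ = ψ :=
  DirectSum.linearMap_ext _ fun ⟨(a, b), hab⟩ => TensorProduct.ext' (h a b hab)

end T2

@[simp] lemma tOp_tmul (k₁ k₂ : ℤ) (F : ∀ a, V₁ a →ₗ[ℚ] W₁ (a + k₁))
    (G : ∀ b, V₂ b →ₗ[ℚ] W₂ (b + k₂)) {n a b : ℤ} (hab : a + b = n) (x : V₁ a) (y : V₂ b) :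
    tOp k₁ k₂ F G n (T2.tmul a b hab x y)
      = ((-1 : ℚ) ^ (k₂ * a)) • T2.tmul (a + k₁) (b + k₂) (by omega) (F a x) (G b y) := by
  simp [tOp, T2.tmul]

def tensorMap (f : ∀ a, V₁ a →ₗ[ℚ] W₁ a) (g : ∀ b, V₂ b →ₗ[ℚ] W₂ b) (n : ℤ) :
    T2 V₁ V₂ n →ₗ[ℚ] T2 W₁ W₂ n :=
  (castLM (V := fun m => T2 W₁ W₂ m) (show n + ((0 : ℤ) + 0) = n by omega)).comp
    (tOp 0 0 (sh0 f) (sh0 g) n)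

@[simp] lemma tensorMap_tmul (f : ∀ a, V₁ a →ₗ[ℚ] W₁ a) (g : ∀ b, V₂ b →ₗ[ℚ] W₂ b)
    {n a b : ℤ} (hab : a + b = n) (x : V₁ a) (y : V₂ b) :
    tensorMap f g n (T2.tmul a b hab x y) = T2.tmul a b hab (f a x) (g b y) := by
  simp [tensorMap, sh0]

lemma tensorMap_sub_left (f f' : ∀ a, V₁ a →ₗ[ℚ] W₁ a) (g : ∀ b, V₂ b →ₗ[ℚ] W₂ b) (n : ℤ) :
    tensorMap (f - f') g n = tensorMap f g n - tensorMap f' g n :=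
  T2.hom_ext fun _ _ _ _ _ => by simp [T2.tmul_sub_left]

lemma tensorMap_sub_right (f : ∀ a, V₁ a →ₗ[ℚ] W₁ a) (g g' : ∀ b, V₂ b →ₗ[ℚ] W₂ b) (n : ℤ) :
    tensorMap f (g - g') n = tensorMap f g n - tensorMap f g' n :=
  T2.hom_ext fun _ _ _ _ _ => by simp [T2.tmul_sub_right]

lemma tensorMap_id (n : ℤ) :
    tensorMap (fun a => LinearMap.id (M := V₁ a)) (fun b => LinearMap.id (M := V₂ b)) n
      = LinearMap.id :=
  T2.hom_ext fun _ _ _ _ _ => by simp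

lemma neg_one_zpow_inv (a : ℤ) : ((-1 : ℚ) ^ a)⁻¹ = (-1) ^ a := by
  rw [← inv_zpow, inv_neg_one]

lemma neg_one_zpow_add_one (a : ℤ) : (-1 : ℚ) ^ (a + 1) = -(-1) ^ a := by
  rw [zpow_add_one₀ (by norm_num), mul_neg_one]

lemma neg_one_zpow_add_neg_one (a : ℤ) : (-1 : ℚ) ^ (a + (-1)) = -(-1) ^ a := by
  rw [zpow_add₀ (by norm_num), zpow_neg_one, inv_neg_one, mul_neg_one]

lemma neg_one_zpow_mul_self (a : ℤ) : (-1 : ℚ) ^ a * (-1) ^ a = 1 := by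
  rw [← mul_zpow, neg_one_mul, neg_neg, one_zpow]

def gradedCommutator (d : ∀ n, V n →ₗ[ℚ] V (n + 1)) (h : ∀ n, V n →ₗ[ℚ] V (n + (-1)))
    (n : ℤ) : V n →ₗ[ℚ] V n :=
  (castLM (neg_add_cancel_right n 1)).comp ((d (n + (-1))).comp (h n))
    + (castLM (add_neg_cancel_right n 1)).comp ((h (n + 1)).comp (d n))

lemma gradedCommutator_add (d : ∀ n, V n →ₗ[ℚ] V (n + 1)) (h h' : ∀ n, V n →ₗ[ℚ] V (n + (-1)))
    (n : ℤ) : gradedCommutator d (h + h') n = gradedCommutator d h n + gradedCommutator d h' n := by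
  ext x
  simp only [gradedCommutator, LinearMap.add_apply, LinearMap.comp_apply, Pi.add_apply, map_add]
  abel

lemma gradedCommutator_smul (d : ∀ n, V n →ₗ[ℚ] V (n + 1)) (c : ℚ)
    (h : ∀ n, V n →ₗ[ℚ] V (n + (-1))) (n : ℤ) :
    gradedCommutator d (c • h) n = c • gradedCommutator d h n := by
  ext x
  simp only [gradedCommutator, LinearMap.add_apply, LinearMap.comp_apply, Pi.smul_apply,
    LinearMap.smul_apply, map_smul, smul_add]

@[simp] lemma dT_tmul (d₁ : ∀ n, V₁ n →ₗ[ℚ] V₁ (n + 1)) (d₂ : ∀ n, V₂ n →ₗ[ℚ] V₂ (n + 1))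
    {n a b : ℤ} (hab : a + b = n) (x : V₁ a) (y : V₂ b) :
    dT V₁ V₂ d₁ d₂ n (T2.tmul a b hab x y)
      = T2.tmul (a + 1) b (by omega) (d₁ a x) y
        + (-1 : ℚ) ^ a • T2.tmul a (b + 1) (by omega) x (d₂ b y) := by
  simp [dT, sh0]

def tensorHomotopyLeft (F : ∀ a, V₁ a →ₗ[ℚ] V₁ (a + (-1))) (g : ∀ b, V₂ b →ₗ[ℚ] V₂ b) (n : ℤ) :
    T2 V₁ V₂ n →ₗ[ℚ] T2 V₁ V₂ (n + (-1)) :=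
  (castLM (V := fun m => T2 V₁ V₂ m) (show n + ((-1 : ℤ) + 0) = n + (-1) by omega)).comp
    (tOp (-1) 0 F (sh0 g) n)

def tensorHomotopyRight (f : ∀ a, V₁ a →ₗ[ℚ] V₁ a) (H : ∀ b, V₂ b →ₗ[ℚ] V₂ (b + (-1))) (n : ℤ) :
    T2 V₁ V₂ n →ₗ[ℚ] T2 V₁ V₂ (n + (-1)) :=
  (castLM (V := fun m => T2 V₁ V₂ m) (show n + ((0 : ℤ) + (-1)) = n + (-1) by omega)).comp
    (tOp 0 (-1) (sh0 f) H n)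

@[simp] lemma tensorHomotopyLeft_tmul (F : ∀ a, V₁ a →ₗ[ℚ] V₁ (a + (-1)))
    (g : ∀ b, V₂ b →ₗ[ℚ] V₂ b) {n a b : ℤ} (hab : a + b = n) (x : V₁ a) (y : V₂ b) :
    tensorHomotopyLeft F g n (T2.tmul a b hab x y)
      = T2.tmul (a + (-1)) b (by omega) (F a x) (g b y) := by
  simp [tensorHomotopyLeft, sh0]

@[simp] lemma tensorHomotopyRight_tmul (f : ∀ a, V₁ a →ₗ[ℚ] V₁ a)
    (H : ∀ b, V₂ b →ₗ[ℚ] V₂ (b + (-1))) {n a b : ℤ} (hab : a + b = n) (x : V₁ a) (y : V₂ b) :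
    tensorHomotopyRight f H n (T2.tmul a b hab x y)
      = (-1 : ℚ) ^ a • T2.tmul a (b + (-1)) (by omega) (f a x) (H b y) := by
  simp [tensorHomotopyRight, sh0, neg_one_zpow_inv]

lemma gradedCommutator_tensorHomotopyLeft (d₁ : ∀ n, V₁ n →ₗ[ℚ] V₁ (n + 1))
    (d₂ : ∀ n, V₂ n →ₗ[ℚ] V₂ (n + 1)) (F : ∀ a, V₁ a →ₗ[ℚ] V₁ (a + (-1)))
    (g : ∀ b, V₂ b →ₗ[ℚ] V₂ b) (hg : ∀ b y, g (b + 1) (d₂ b y) = d₂ b (g b y)) (n : ℤ) :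
    gradedCommutator (dT V₁ V₂ d₁ d₂) (tensorHomotopyLeft F g) n
      = tensorMap (gradedCommutator d₁ F) g n := by
  refine T2.hom_ext fun a b hab x y => ?_
  simp only [gradedCommutator, LinearMap.add_apply, LinearMap.comp_apply, tensorHomotopyLeft_tmul,
    dT_tmul, map_add, map_smul, T2.castLM_tmul, tensorMap_tmul, T2.tmul_add_left,
    T2.tmul_castLM_left, hg, neg_one_zpow_add_neg_one]
  module

lemma gradedCommutator_tensorHomotopyRight (d₁ : ∀ n, V₁ n →ₗ[ℚ] V₁ (n + 1))
    (d₂ : ∀ n, V₂ n →ₗ[ℚ] V₂ (n + 1)) (f : ∀ a, V₁ a →ₗ[ℚ] V₁ a)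
    (hf : ∀ a x, f (a + 1) (d₁ a x) = d₁ a (f a x)) (H : ∀ b, V₂ b →ₗ[ℚ] V₂ (b + (-1))) (n : ℤ) :
    gradedCommutator (dT V₁ V₂ d₁ d₂) (tensorHomotopyRight f H) n
      = tensorMap f (gradedCommutator d₂ H) n := by
  refine T2.hom_ext fun a b hab x y => ?_
  simp only [gradedCommutator, LinearMap.add_apply, LinearMap.comp_apply,
    tensorHomotopyRight_tmul, dT_tmul, map_add, map_smul, T2.castLM_tmul, tensorMap_tmul,
    T2.tmul_add_right, T2.tmul_castLM_right, hf, smul_add, smul_smul, neg_one_zpow_mul_self,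
    one_smul, neg_one_zpow_add_one]
  module

lemma gradedCommutator_tensorHomotopy (d₁ : ∀ n, V₁ n →ₗ[ℚ] V₁ (n + 1))
    (d₂ : ∀ n, V₂ n →ₗ[ℚ] V₂ (n + 1)) (F : ∀ a, V₁ a →ₗ[ℚ] V₁ (a + (-1)))
    (g : ∀ b, V₂ b →ₗ[ℚ] V₂ b) (f : ∀ a, V₁ a →ₗ[ℚ] V₁ a) (H : ∀ b, V₂ b →ₗ[ℚ] V₂ (b + (-1)))
    (hf : ∀ a x, f (a + 1) (d₁ a x) = d₁ a (f a x))
    (hg : ∀ b y, g (b + 1) (d₂ b y) = d₂ b (g b y)) (n : ℤ) :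
    gradedCommutator (dT V₁ V₂ d₁ d₂) (tensorHomotopyLeft F g + tensorHomotopyRight f H) n
      = tensorMap (gradedCommutator d₁ F) g n + tensorMap f (gradedCommutator d₂ H) n := by
  rw [gradedCommutator_add, gradedCommutator_tensorHomotopyLeft _ _ _ _ hg,
    gradedCommutator_tensorHomotopyRight _ _ _ hf]

end TensorCalculus

lemma ipT_eq_tensorMap (i₁ : ∀ n, A₁ n →ₗ[ℚ] B₁ n) (p₁ : ∀ n, B₁ n →ₗ[ℚ] A₁ n)
    (i₂ : ∀ n, A₂ n →ₗ[ℚ] B₂ n) (p₂ : ∀ n, B₂ n →ₗ[ℚ] A₂ n) :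
    ipT A₁ A₂ B₁ B₂ i₁ p₁ i₂ p₂
      = tensorMap (fun a => (i₁ a).comp (p₁ a)) (fun b => (i₂ b).comp (p₂ b)) := rfl

lemma hT_eq_tensorHomotopy (i₁ : ∀ n, A₁ n →ₗ[ℚ] B₁ n) (p₁ : ∀ n, B₁ n →ₗ[ℚ] A₁ n)
    (h₁ : ∀ n, B₁ n →ₗ[ℚ] B₁ (n + (-1))) (h₂ : ∀ n, B₂ n →ₗ[ℚ] B₂ (n + (-1))) :
    hT A₁ B₁ B₂ i₁ p₁ h₁ h₂
      = tensorHomotopyLeft h₁ (fun _ => LinearMap.id)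
        + tensorHomotopyRight (fun a => (i₁ a).comp (p₁ a)) h₂ := rfl

lemma hT'_eq_tensorHomotopy (i₂ : ∀ n, A₂ n →ₗ[ℚ] B₂ n) (p₂ : ∀ n, B₂ n →ₗ[ℚ] A₂ n)
    (h₁ : ∀ n, B₁ n →ₗ[ℚ] B₁ (n + (-1))) (h₂ : ∀ n, B₂ n →ₗ[ℚ] B₂ (n + (-1))) :
    hT' A₂ B₁ B₂ i₂ p₂ h₁ h₂
      = tensorHomotopyLeft h₁ (fun b => (i₂ b).comp (p₂ b))
        + tensorHomotopyRight (fun _ => LinearMap.id) h₂ := rfl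

/-- For SDRs `(A₁, B₁, i₁, p₁, h₁)` and `(A₂, B₂, i₂, p₂, h₂)`, the
non-symmetric tensor product homotopy `h₁⊗1 + (i₁p₁)⊗h₂` generally differs from its conjugate
by the symmetry `(1 2)`, which equals `h₁⊗(i₂p₂) + 1⊗h₂`; however, both are homotopies from
`(i₁p₁)⊗(i₂p₂)` to the identity, so their average
`(1/2)(h₁⊗1 + (i₁p₁)⊗h₂ + h₁⊗(i₂p₂) + 1⊗h₂)` also satisfies `dh + hd = 1 − (i₁p₁)⊗(i₂p₂)`. -/
theorem conjugate_and_average_homotopies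
    (dA₁ : ∀ n, A₁ n →ₗ[ℚ] A₁ (n + 1)) (dA₂ : ∀ n, A₂ n →ₗ[ℚ] A₂ (n + 1))
    (dB₁ : ∀ n, B₁ n →ₗ[ℚ] B₁ (n + 1)) (dB₂ : ∀ n, B₂ n →ₗ[ℚ] B₂ (n + 1))
    (i₁ : ∀ n, A₁ n →ₗ[ℚ] B₁ n) (p₁ : ∀ n, B₁ n →ₗ[ℚ] A₁ n)
    (h₁ : ∀ n, B₁ n →ₗ[ℚ] B₁ (n + (-1)))
    (i₂ : ∀ n, A₂ n →ₗ[ℚ] B₂ n) (p₂ : ∀ n, B₂ n →ₗ[ℚ] A₂ n)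
    (h₂ : ∀ n, B₂ n →ₗ[ℚ] B₂ (n + (-1)))
    (hi₁ : ∀ n x, dB₁ n (i₁ n x) = i₁ (n + 1) (dA₁ n x))
    (hi₂ : ∀ n x, dB₂ n (i₂ n x) = i₂ (n + 1) (dA₂ n x))
    (hp₁ : ∀ n x, dA₁ n (p₁ n x) = p₁ (n + 1) (dB₁ n x))
    (hp₂ : ∀ n x, dA₂ n (p₂ n x) = p₂ (n + 1) (dB₂ n x))
    (hh₁ : ∀ n x, castLM (V := B₁) (show n + (-1) + 1 = n by omega) (dB₁ (n + (-1)) (h₁ n x))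
        + castLM (V := B₁) (show n + 1 + (-1) = n by omega) (h₁ (n + 1) (dB₁ n x))
      = x - i₁ n (p₁ n x))
    (hh₂ : ∀ n x, castLM (V := B₂) (show n + (-1) + 1 = n by omega) (dB₂ (n + (-1)) (h₂ n x))
        + castLM (V := B₂) (show n + 1 + (-1) = n by omega) (h₂ (n + 1) (dB₂ n x))
      = x - i₂ n (p₂ n x)) :
    (∀ (n : ℤ) (x : T2 B₁ B₂ n),
        castLM (V := fun m => T2 B₁ B₂ m) (show n + (-1) + 1 = n by omega)
            (dT B₁ B₂ dB₁ dB₂ (n + (-1)) (hT' A₂ B₁ B₂ i₂ p₂ h₁ h₂ n x))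
          + castLM (V := fun m => T2 B₁ B₂ m) (show n + 1 + (-1) = n by omega)
            (hT' A₂ B₁ B₂ i₂ p₂ h₁ h₂ (n + 1) (dT B₁ B₂ dB₁ dB₂ n x))
        = x - ipT A₁ A₂ B₁ B₂ i₁ p₁ i₂ p₂ n x) ∧
    (∀ (n : ℤ) (x : T2 B₁ B₂ n),
        castLM (V := fun m => T2 B₁ B₂ m) (show n + (-1) + 1 = n by omega)
            (dT B₁ B₂ dB₁ dB₂ (n + (-1))
              ((2 : ℚ)⁻¹ • (hT A₁ B₁ B₂ i₁ p₁ h₁ h₂ n + hT' A₂ B₁ B₂ i₂ p₂ h₁ h₂ n) x))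
          + castLM (V := fun m => T2 B₁ B₂ m) (show n + 1 + (-1) = n by omega)
            (((2 : ℚ)⁻¹ • (hT A₁ B₁ B₂ i₁ p₁ h₁ h₂ (n + 1) + hT' A₂ B₁ B₂ i₂ p₂ h₁ h₂ (n + 1)))
              (dT B₁ B₂ dB₁ dB₂ n x))
        = x - ipT A₁ A₂ B₁ B₂ i₁ p₁ i₂ p₂ n x) := by
  have hip₁ : ∀ a x, (i₁ (a + 1)).comp (p₁ (a + 1)) (dB₁ a x) = dB₁ a ((i₁ a).comp (p₁ a) x) :=
    fun a x => by simp only [LinearMap.comp_apply, hi₁, hp₁]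
  have hip₂ : ∀ b y, (i₂ (b + 1)).comp (p₂ (b + 1)) (dB₂ b y) = dB₂ b ((i₂ b).comp (p₂ b) y) :=
    fun b y => by simp only [LinearMap.comp_apply, hi₂, hp₂]
  have hc₁ : gradedCommutator dB₁ h₁ = (fun _ => LinearMap.id) - fun a => (i₁ a).comp (p₁ a) :=
    funext fun a => LinearMap.ext (hh₁ a)
  have hc₂ : gradedCommutator dB₂ h₂ = (fun _ => LinearMap.id) - fun b => (i₂ b).comp (p₂ b) :=
    funext fun b => LinearMap.ext (hh₂ b)
  have hT_spec : ∀ n, gradedCommutator (dT B₁ B₂ dB₁ dB₂) (hT A₁ B₁ B₂ i₁ p₁ h₁ h₂) n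
      = LinearMap.id - ipT A₁ A₂ B₁ B₂ i₁ p₁ i₂ p₂ n := fun n => by
    rw [hT_eq_tensorHomotopy, ipT_eq_tensorMap,
      gradedCommutator_tensorHomotopy _ _ _ _ _ _ hip₁ fun _ _ => rfl, hc₁, hc₂,
      tensorMap_sub_left, tensorMap_sub_right, tensorMap_id]
    abel
  have hT'_spec : ∀ n, gradedCommutator (dT B₁ B₂ dB₁ dB₂) (hT' A₂ B₁ B₂ i₂ p₂ h₁ h₂) n
      = LinearMap.id - ipT A₁ A₂ B₁ B₂ i₁ p₁ i₂ p₂ n := fun n => by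
    rw [hT'_eq_tensorHomotopy, ipT_eq_tensorMap,
      gradedCommutator_tensorHomotopy _ _ _ _ _ _ (fun _ _ => rfl) hip₂, hc₁, hc₂,
      tensorMap_sub_left, tensorMap_sub_right, tensorMap_id]
    abel
  refine ⟨fun n x => LinearMap.congr_fun (hT'_spec n) x, fun n x => ?_⟩
  have avg := LinearMap.congr_fun (gradedCommutator_smul (dT B₁ B₂ dB₁ dB₂) (2 : ℚ)⁻¹
    (hT A₁ B₁ B₂ i₁ p₁ h₁ h₂ + hT' A₂ B₁ B₂ i₂ p₂ h₁ h₂) n) x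
  rwa [gradedCommutator_add, hT_spec, hT'_spec, ← two_smul ℚ, smul_smul,
    inv_mul_cancel₀ two_ne_zero, one_smul] at avg

end Statement
end
end

section
/- If i: A → A has degree −2 and d has degree 1 on a graded vector space A, and i²d − 2idi + di² = 0, then Δ := id − di satisfies Δ² = 0. -/
/-- If `i : A → A` has degree `−2` and `d` has degree `1` on a graded vector
space `A`, with `d² = 0` and `i²d − 2idi + di² = 0`, then `Δ := id − di` satisfies `Δ² = 0`.
(The identity is purely algebraic in the endomorphism algebra `End(A)`.) -/
theorem exact_bv_delta_squared_zero {K : Type*} [Field K] [CharZero K]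
    {A : Type*} [AddCommGroup A] [Module K A]
    (d i : Module.End K A)
    (hd : d * d = 0)
    (h : i * i * d - 2 • (i * d * i) + d * (i * i) = 0) :
    (i * d - d * i) * (i * d - d * i) = 0 := by
  have e1 : d * (i * (i * d)) - 2 • (d * (i * (d * i)))
      = d * (i * i * d - 2 • (i * d * i) + d * (i * i)) - (d * d) * (i * i) := by
    noncomm_ring
  rw [h, hd, mul_zero, zero_mul, sub_zero] at e1
  have e2 : d * (i * (i * d)) - 2 • (i * (d * (i * d)))
      = (i * i * d - 2 • (i * d * i) + d * (i * i)) * d - i * (i * (d * d)) := by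
    noncomm_ring
  rw [h, hd, mul_zero, mul_zero, zero_mul, sub_zero] at e2
  have e3 : 2 • (d * (i * (d * i))) = 2 • (i * (d * (i * d))) := by
    have h1 := sub_eq_zero.mp e1
    have h2 := sub_eq_zero.mp e2
    rw [← h1, ← h2]
  have key : d * (i * (d * i)) = i * (d * (i * d)) := by
    have e4 : (2 : K) • (d * (i * (d * i))) = (2 : K) • (i * (d * (i * d))) := by
      rw [show ((2:K) = ((2:ℕ):K)) by norm_num, Nat.cast_smul_eq_nsmul,
        Nat.cast_smul_eq_nsmul]
      exact e3
    exact smul_right_injective _ (by norm_num : (2:K) ≠ 0) e4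
  have expand : (i * d - d * i) * (i * d - d * i)
      = (i * (d * (i * d)) - d * (i * (d * i))) - i * (d * d) * i
        - (d * (i * (i * d)) - 2 • (d * (i * (d * i)))) := by
    noncomm_ring
  rw [expand, e1, hd, key]; simp
end

section
/- A Jacobi algebra (A, d, ·, i, j) is a commutative BV∞-algebra with Δ₁ = [i,d], Δ₂ = −ji, and Δₙ = 0 for n ≥ 3; that is, [d,Δ₁] = 0, [d,Δ₂] + Δ₁² = 0, Δ₁Δ₂ + Δ₂Δ₁ = 0, and Δ₂² = 0. -/
/-!
Write `Δ₁ = [i,d]`. Then `[d,Δ₁] = [i,d²] = 0`. Expanding `[d,[i,[i,d]]]` with `d² = 0` gives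
`-2Δ₁²`, so `[i,[i,d]] = -2ji` yields `2([d,-ji] + Δ₁²) = 0`, and one divides by `2` over `ℚ`.
Since `[i,Δ₁] = -2ji` and `Δ₁` anticommutes with `j`, `Δ₁ji = -jΔ₁i = -j(iΔ₁ + 2ji) = -jiΔ₁`
because `j² = 0`. Finally `(ji)² = j²i² = 0` since `i` and `j` commute.
-/

/-- Graded commutativity with Koszul signs. -/
def GradedComm {A : Type*} [Ring A] [Algebra ℚ A] (𝒜 : ℤ → Submodule ℚ A) : Prop :=
  ∀ (m n : ℤ) (x y : A), x ∈ 𝒜 m → y ∈ 𝒜 n → x * y = ((-1 : ℚ) ^ (m * n)) • (y * x)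

/-- `D` is homogeneous of degree `k` with respect to the grading `𝒜`. -/
def Homog {A : Type*} [Ring A] [Algebra ℚ A] (𝒜 : ℤ → Submodule ℚ A) (k : ℤ)
    (D : Module.End ℚ A) : Prop :=
  ∀ (m : ℤ) (x : A), x ∈ 𝒜 m → D x ∈ 𝒜 (m + k)

/-- Differential operator of order `≤ 1` (the shuffle-sum definition for `n = 1`). -/
def IsDO1 {A : Type*} [Ring A] [Algebra ℚ A] (𝒜 : ℤ → Submodule ℚ A)
    (D : Module.End ℚ A) : Prop :=
  ∀ (m n : ℤ) (x y : A), x ∈ 𝒜 m → y ∈ 𝒜 n →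
    D (x * y) = D x * y + ((-1 : ℚ) ^ (m * n)) • (D y * x)

/-- Differential operator of order `≤ 2` (the shuffle-sum definition for `n = 2`). -/
def IsDO2 {A : Type*} [Ring A] [Algebra ℚ A] (𝒜 : ℤ → Submodule ℚ A)
    (D : Module.End ℚ A) : Prop :=
  ∀ (a b c : ℤ) (x y z : A), x ∈ 𝒜 a → y ∈ 𝒜 b → z ∈ 𝒜 c →
    D (x * y) * z + ((-1 : ℚ) ^ (b * c)) • (D (x * z) * y)
      + ((-1 : ℚ) ^ (a * (b + c))) • (D (y * z) * x)
    = D x * (y * z) + ((-1 : ℚ) ^ (a * b)) • (D y * (x * z))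
      + ((-1 : ℚ) ^ (c * (a + b))) • (D z * (x * y)) + D (x * y * z)

section Ring

variable {R : Type*} [Ring R] {d : R}

theorem anticomm_commutator_eq_zero_of_mul_self_eq_zero (i : R) (hdd : d * d = 0) :
    d * (i * d - d * i) + (i * d - d * i) * d = 0 :=
  calc d * (i * d - d * i) + (i * d - d * i) * d = i * (d * d) - (d * d) * i := by noncomm_ring
    _ = 0 := by simp [hdd]

theorem anticomm_double_commutator_of_mul_self_eq_zero (i : R) (hdd : d * d = 0) :
    d * (i * (i * d - d * i) - (i * d - d * i) * i)
        + (i * (i * d - d * i) - (i * d - d * i) * i) * d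
      = -(2 • ((i * d - d * i) * (i * d - d * i))) :=
  calc _ = -(2 • ((i * d - d * i) * (i * d - d * i)))
          + ((d * d) * (i * i) + i * i * (d * d) - 2 • (i * (d * d) * i)) := by noncomm_ring
    _ = _ := by simp [hdd]

theorem anticomm_neg_mul_add_sq_eq_zero [IsAddTorsionFree R] {i j : R} (hdd : d * d = 0)
    (hii : i * (i * d - d * i) - (i * d - d * i) * i = -(2 • (j * i))) :
    d * (-(j * i)) + (-(j * i)) * d + (i * d - d * i) * (i * d - d * i) = 0 := by
  have h := anticomm_double_commutator_of_mul_self_eq_zero i hdd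
  rw [hii] at h
  have htwice : 2 • (d * (-(j * i)) + (-(j * i)) * d + (i * d - d * i) * (i * d - d * i)) = 0 :=
    calc _ = d * -(2 • (j * i)) + -(2 • (j * i)) * d + 2 • ((i * d - d * i) * (i * d - d * i)) := by
          noncomm_ring
      _ = 0 := by rw [h, neg_add_cancel]
  exact (smul_eq_zero.mp htwice).resolve_left two_ne_zero

theorem anticomm_commutator_neg_mul_eq_zero {i j : R}
    (hii : i * (i * d - d * i) - (i * d - d * i) * i = -(2 • (j * i)))
    (hj : j * (i * d - d * i) + (i * d - d * i) * j = 0) (hjj : j * j = 0) :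
    (i * d - d * i) * (-(j * i)) + (-(j * i)) * (i * d - d * i) = 0 := by
  set Δ := i * d - d * i
  have hΔj : Δ * j = -(j * Δ) := eq_neg_of_add_eq_zero_right hj
  have hΔi : Δ * i = i * Δ + 2 • (j * i) := by rw [← sub_eq_iff_eq_add', ← neg_sub, hii, neg_neg]
  calc Δ * (-(j * i)) + (-(j * i)) * Δ = -((Δ * j) * i) - j * i * Δ := by noncomm_ring
    _ = j * (Δ * i) - j * i * Δ := by rw [hΔj]; noncomm_ring
    _ = 2 • ((j * j) * i) := by rw [hΔi]; noncomm_ring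
    _ = 0 := by rw [hjj, zero_mul, smul_zero]

theorem mul_self_neg_mul_eq_zero_of_commute {i j : R} (hij : Commute j i) (hjj : j * j = 0) :
    (-(j * i)) * (-(j * i)) = 0 := by
  rw [neg_mul_neg, ← sq, hij.mul_pow, sq j, hjj, zero_mul]

end Ring

theorem jacobi_is_commutative_bv_infinity_general {A : Type*} [Ring A] [Algebra ℚ A]
    (d : Module.End ℚ A) (hdd : d * d = 0)
    (i : Module.End ℚ A)
    (j : Module.End ℚ A)
    (r1 : i * (i * d - d * i) - (i * d - d * i) * i = -(2 • (j * i)))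
    (r2 : i * j - j * i = 0)
    (r3 : j * (i * d - d * i) + (i * d - d * i) * j = 0)
    (r4 : j * j = 0) :
    d * (i * d - d * i) + (i * d - d * i) * d = 0 ∧
    d * (-(j * i)) + (-(j * i)) * d + (i * d - d * i) * (i * d - d * i) = 0 ∧
    (i * d - d * i) * (-(j * i)) + (-(j * i)) * (i * d - d * i) = 0 ∧
    (-(j * i)) * (-(j * i)) = 0 := by
  have : IsAddTorsionFree (Module.End ℚ A) := .of_module_rat _
  exact ⟨anticomm_commutator_eq_zero_of_mul_self_eq_zero i hdd,
    anticomm_neg_mul_add_sq_eq_zero hdd r1, anticomm_commutator_neg_mul_eq_zero r1 r3 r4,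
    mul_self_neg_mul_eq_zero_of_commute (sub_eq_zero.mp r2).symm r4⟩

/-- A Jacobi algebra `(A, d, ·, i, j)` — a DG commutative algebra with a
degree `−2` order `≤ 2` differential operator `i` and a degree `−1` order `≤ 1` differential
operator `j` satisfying `[i,[i,d]] = −2ji`, `[i,j] = 0`, `[j,[i,d]] = 0`, `j² = 0` — is a
commutative BV∞-algebra with `Δ₁ = [i,d]`, `Δ₂ = −ji` and `Δₙ = 0` for `n ≥ 3`; that is,
`[d,Δ₁] = 0`, `[d,Δ₂] + Δ₁² = 0`, `Δ₁Δ₂ + Δ₂Δ₁ = 0` and `Δ₂² = 0`.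
(Graded commutators: `i` is even, so `[i,x] = ix − xi`; `j`, `d`, `Δ₁` and `Δ₂` are odd, so
their mutual brackets are anticommutators.) -/
theorem jacobi_is_commutative_bv_infinity {A : Type*} [Ring A] [Algebra ℚ A]
    (𝒜 : ℤ → Submodule ℚ A) (hcomm : GradedComm 𝒜)
    (d : Module.End ℚ A) (hd_deg : Homog 𝒜 1 d) (hd_leib : IsDO1 𝒜 d) (hdd : d * d = 0)
    (i : Module.End ℚ A) (hi_deg : Homog 𝒜 (-2) i) (hi_ord : IsDO2 𝒜 i)
    (j : Module.End ℚ A) (hj_deg : Homog 𝒜 (-1) j) (hj_ord : IsDO1 𝒜 j)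
    (r1 : i * (i * d - d * i) - (i * d - d * i) * i = -(2 • (j * i)))
    (r2 : i * j - j * i = 0)
    (r3 : j * (i * d - d * i) + (i * d - d * i) * j = 0)
    (r4 : j * j = 0) :
    d * (i * d - d * i) + (i * d - d * i) * d = 0 ∧
    d * (-(j * i)) + (-(j * i)) * d + (i * d - d * i) * (i * d - d * i) = 0 ∧
    (i * d - d * i) * (-(j * i)) + (-(j * i)) * (i * d - d * i) = 0 ∧
    (-(j * i)) * (-(j * i)) = 0 :=
  jacobi_is_commutative_bv_infinity_general d hdd i j r1 r2 r3 r4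
end

section
/- In a Jacobi algebra, the triple iterated commutator [i,[i,[i,d]]] vanishes; consequently, with φ₁ = i and φₙ = 0 for n ≥ 2, the trivialization equation e^{φ(z)} d e^{−φ(z)} = d + Δ₁z + Δ₂z² holds, where Δ₁ = [i,d] and Δ₂ = −ji = (1/2)[i,[i,d]]. -/
/-!
The relations give `[i,[i,[i,d]]] = [i, -2ji] = -2[i,j]i = 0`. Since left multiplication by `i`
is `ad i` plus the commuting right multiplication by `i`, conjugating by `e^{iX}` acts on `d` as
`e^{X ad i}`, and `e^{-iX}` is the inverse of `e^{iX}` because `i` and `-i` commute (both come from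
`ℚ[T]`). Hence `e^{iX} d e^{-iX} = d + [i,d] X + ½[i,[i,d]] X²` and `½[i,[i,d]] = -ji`.
-/

section

open Finset PowerSeries LieAlgebra

attribute [local instance] LieRing.ofAssociativeRing LieAlgebra.ofAssociativeAlgebra

-- Left multiplication by `a` is `ad a` plus right multiplication by `a`, and these two commute.
theorem pow_mul_eq_sum_ad_pow_mul {K R : Type*} [CommRing K] [Ring R] [Algebra K R]
    (a b : R) (n : ℕ) :
    a ^ n * b = ∑ p ∈ antidiagonal n, n.choose p.1 • ((ad K R a ^ p.1) b * a ^ p.2) := by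
  have hcomm : Commute (ad K R a) (LinearMap.mulRight K a) := by
    rw [ad_eq_lmul_left_sub_lmul_right]
    exact (LinearMap.commute_mulLeft_right a a).sub_left (Commute.refl _)
  have hsplit : LinearMap.mulLeft K a = ad K R a + LinearMap.mulRight K a := by
    rw [ad_eq_lmul_left_sub_lmul_right]; simp
  calc a ^ n * b = (LinearMap.mulLeft K a ^ n) b := by rw [LinearMap.pow_mulLeft]; rfl
    _ = _ := by
      rw [hsplit, hcomm.add_pow', LinearMap.sum_apply]
      refine Finset.sum_congr rfl fun p _ => ?_
      rw [(hcomm.pow_pow _ _).eq, LinearMap.smul_apply, Module.End.mul_apply,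
        LinearMap.pow_mulRight, LinearMap.mulRight_apply]

namespace PowerSeries

variable {R : Type*} [Ring R] [Algebra ℚ R]

/-- The series `e^{aX}`; Mathlib's `rescale a (exp R)` needs `R` commutative. -/
noncomputable def expOf (a : R) : R⟦X⟧ :=
  mk fun n => (n.factorial : ℚ)⁻¹ • a ^ n

theorem map_aeval_rescale_exp (a : R) (p : Polynomial ℚ) :
    map (Polynomial.aeval a).toRingHom (rescale p (exp (Polynomial ℚ))) =
      expOf (Polynomial.aeval a p) := by
  ext n
  simp [expOf, coeff_exp, map_pow, Algebra.smul_def, Algebra.commutes]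

theorem expOf_mul_expOf_neg (a : R) : expOf a * expOf (-a) = 1 := by
  have h := congrArg (map (Polynomial.aeval a).toRingHom)
    (exp_mul_exp_eq_exp_add (A := Polynomial ℚ) Polynomial.X (-Polynomial.X))
  rwa [map_mul, map_aeval_rescale_exp, map_aeval_rescale_exp, add_neg_cancel, rescale_zero,
    RingHom.comp_apply, constantCoeff_exp, map_one, map_one, Polynomial.aeval_X, map_neg,
    Polynomial.aeval_X] at h

theorem expOf_mul_C (a b : R) :
    expOf a * C b = (mk fun n => (n.factorial : ℚ)⁻¹ • (ad ℚ R a ^ n) b) * expOf a := by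
  ext n
  rw [coeff_mul_C, coeff_mul, expOf, coeff_mk, smul_mul_assoc,
    pow_mul_eq_sum_ad_pow_mul (K := ℚ), smul_sum]
  refine sum_congr rfl fun p hp => ?_
  obtain rfl := mem_antidiagonal.mp hp
  have hfact : ((p.1 + p.2).factorial : ℚ)⁻¹ * (p.1 + p.2).choose p.1
      = (p.1.factorial : ℚ)⁻¹ * (p.2.factorial : ℚ)⁻¹ := by
    rw [Nat.cast_add_choose]
    field_simp
  simp only [coeff_mk, smul_mul_smul_comm, ← Nat.cast_smul_eq_nsmul ℚ, smul_smul, hfact]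

theorem expOf_mul_C_mul_expOf_neg (a b : R) :
    expOf a * C b * expOf (-a) = mk fun n => (n.factorial : ℚ)⁻¹ • (ad ℚ R a ^ n) b := by
  rw [expOf_mul_C, mul_assoc, expOf_mul_expOf_neg, mul_one]

theorem expOf_mul_C_mul_expOf_neg_of_ad_pow_three_eq_zero (a b : R) (h : (ad ℚ R a ^ 3) b = 0) :
    expOf a * C b * expOf (-a) = C b + C ⁅a, b⁆ * X + C ((2 : ℚ)⁻¹ • ⁅a, ⁅a, b⁆⁆) * X ^ 2 := by
  rw [expOf_mul_C_mul_expOf_neg]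
  ext (_ | _ | _ | n)
  · simp
  · simp
  · simp [pow_two]
  · have : (ad ℚ R a ^ (n + 3)) b = 0 := by rw [pow_add, Module.End.mul_apply, h, map_zero]
    simp [coeff_X_pow, this]

end PowerSeries

end

theorem jacobi_trivialization_general {A : Type*} [Ring A] [Algebra ℚ A]
    (d : Module.End ℚ A)
    (i : Module.End ℚ A)
    (j : Module.End ℚ A)
    (r1 : i * (i * d - d * i) - (i * d - d * i) * i = -(2 • (j * i)))
    (r2 : i * j - j * i = 0) :
    (i * (i * (i * d - d * i) - (i * d - d * i) * i)
      - (i * (i * d - d * i) - (i * d - d * i) * i) * i = 0) ∧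
    (-(j * i) = (2 : ℚ)⁻¹ • (i * (i * d - d * i) - (i * d - d * i) * i)) ∧
    (PowerSeries.mk (fun n => ((n.factorial : ℚ)⁻¹) • i ^ n) *
        PowerSeries.C (R := Module.End ℚ A) d *
        PowerSeries.mk (fun n => ((n.factorial : ℚ)⁻¹) • (-i) ^ n)
      = PowerSeries.C (R := Module.End ℚ A) d +
        PowerSeries.C (R := Module.End ℚ A) (i * d - d * i) * PowerSeries.X +
        PowerSeries.C (R := Module.End ℚ A) (-(j * i)) * PowerSeries.X ^ 2) := by
  have ad_sq : i * (i * d - d * i) - (i * d - d * i) * i = (-2 : ℚ) • (j * i) := by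
    rw [r1, ← Nat.cast_smul_eq_nsmul ℚ, ← neg_smul, Nat.cast_ofNat]
  have ad_cube : i * (i * (i * d - d * i) - (i * d - d * i) * i)
      - (i * (i * d - d * i) - (i * d - d * i) * i) * i = 0 := by
    rw [sub_eq_zero, ad_sq, mul_smul_comm, smul_mul_assoc, ← mul_assoc, sub_eq_zero.mp r2]
  have neg_ji : -(j * i) = (2 : ℚ)⁻¹ • (i * (i * d - d * i) - (i * d - d * i) * i) := by
    rw [ad_sq, smul_smul, ← neg_one_smul ℚ (j * i)]
    norm_num
  refine ⟨ad_cube, neg_ji, ?_⟩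
  rw [neg_ji]
  exact PowerSeries.expOf_mul_C_mul_expOf_neg_of_ad_pow_three_eq_zero i d ad_cube

/-- In a Jacobi algebra the triple iterated commutator `[i,[i,[i,d]]]`
vanishes; consequently, with `φ₁ = i` and `φₙ = 0` for `n ≥ 2`, the trivialization equation
`e^{φ(z)} d e^{−φ(z)} = d + Δ₁ z + Δ₂ z²` holds in `End(A)[[z]]`, where `Δ₁ = [i,d]` and
`Δ₂ = −ji = (1/2)[i,[i,d]]`.  (Since `i` has even degree, its bracket is the ordinary
commutator.) -/
theorem jacobi_trivialization {A : Type*} [Ring A] [Algebra ℚ A]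
    (𝒜 : ℤ → Submodule ℚ A) (hcomm : GradedComm 𝒜)
    (d : Module.End ℚ A) (hd_deg : Homog 𝒜 1 d) (hd_leib : IsDO1 𝒜 d) (hdd : d * d = 0)
    (i : Module.End ℚ A) (hi_deg : Homog 𝒜 (-2) i) (hi_ord : IsDO2 𝒜 i)
    (j : Module.End ℚ A) (hj_deg : Homog 𝒜 (-1) j) (hj_ord : IsDO1 𝒜 j)
    (r1 : i * (i * d - d * i) - (i * d - d * i) * i = -(2 • (j * i)))
    (r2 : i * j - j * i = 0)
    (r3 : j * (i * d - d * i) + (i * d - d * i) * j = 0)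
    (r4 : j * j = 0) :
    (i * (i * (i * d - d * i) - (i * d - d * i) * i)
      - (i * (i * d - d * i) - (i * d - d * i) * i) * i = 0) ∧
    (-(j * i) = (2 : ℚ)⁻¹ • (i * (i * d - d * i) - (i * d - d * i) * i)) ∧
    (PowerSeries.mk (fun n => ((n.factorial : ℚ)⁻¹) • i ^ n) *
        PowerSeries.C (R := Module.End ℚ A) d *
        PowerSeries.mk (fun n => ((n.factorial : ℚ)⁻¹) • (-i) ^ n)
      = PowerSeries.C (R := Module.End ℚ A) d +
        PowerSeries.C (R := Module.End ℚ A) (i * d - d * i) * PowerSeries.X +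
        PowerSeries.C (R := Module.End ℚ A) (-(j * i)) * PowerSeries.X ^ 2) :=
  jacobi_trivialization_general d i j r1 r2
end

section
/- In an exact commutative BV∞-algebra, setting φₙ = iₙ and Δₙ = [iₙ,d], the trivialization equation e^{φ(z)} d e^{−φ(z)} = d + Σₙ Δₙ zⁿ holds in End(A)[[z]]; equivalently, for each n ≥ 1, Σ_{p=1}^{n} (1/p!) Σ_{q₁+⋯+q_p = n, qᵢ≥1} [i_{q₁},…[i_{q_{p−1}},[i_{q_p},d]]…] = Δₙ, because all terms with p ≥ 2 vanish by the relations Σ_j [i_j,[i_{n−j},d]] = 0 together with [iₙ,iₘ] = 0. -/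
/-- Graded differential operators of order `≤ n` (Akman's inductive definition). -/
def IsDiffOp {A : Type*} [Ring A] [Algebra ℚ A] (𝒜 : ℤ → Submodule ℚ A) :
    ℕ → ℤ → Module.End ℚ A → Prop
  | 0, k, D => ∀ (m : ℤ) (x y : A), x ∈ 𝒜 m →
      D (x * y) = ((-1 : ℚ) ^ (k * m)) • (x * D y)
  | (n + 1), k, D => ∀ (m : ℤ) (x : A), x ∈ 𝒜 m →
      IsDiffOp 𝒜 n (k + m)
        (D * LinearMap.mulLeft ℚ x - ((-1 : ℚ) ^ (k * m)) • (LinearMap.mulLeft ℚ x * D))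

/-- The iterated commutator `[i_{q₁}, [i_{q₂}, … [i_{q_p}, d] …]]` (all `i`'s are of even
degree, so these are ordinary commutators). -/
def nestedComm {E : Type*} [Ring E] (i : ℕ → E) (d : E) : List ℕ → E
  | [] => d
  | a :: l => i a * nestedComm i d l - nestedComm i d l * i a


section Aux

lemma sum_filter_antidiagonalTuple_succ {E : Type*} [AddCommMonoid E] (p n : ℕ)
    (F : (Fin (p + 1) → ℕ) → E) :
    ∑ q ∈ (Finset.Nat.antidiagonalTuple (p + 1) n).filter (fun q => ∀ j, 1 ≤ q j), F q
      = ∑ a ∈ Finset.Icc 1 n,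
          ∑ q ∈ (Finset.Nat.antidiagonalTuple p (n - a)).filter (fun q => ∀ j, 1 ≤ q j),
            F (Fin.cons a q) := by
  rw [Finset.sum_sigma']
  refine Finset.sum_nbij' (fun q => ⟨q 0, Fin.tail q⟩) (fun x => Fin.cons x.1 x.2)
    ?_ ?_ ?_ ?_ ?_
  · intro q hq
    simp only [Finset.mem_sigma, Finset.mem_Icc, Finset.mem_filter,
      Finset.Nat.mem_antidiagonalTuple] at hq ⊢
    obtain ⟨hq, hq1⟩ := hq
    have h0 : q 0 ≤ n := hq ▸ Finset.single_le_sum (fun j _ => Nat.zero_le (q j))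
      (Finset.mem_univ 0)
    have hsum : q 0 + ∑ j, Fin.tail q j = n := by
      rw [← hq, Fin.sum_univ_succ]; rfl
    exact ⟨⟨hq1 0, h0⟩, by omega, fun j => hq1 j.succ⟩
  · rintro ⟨a, q⟩ hx
    simp only [Finset.mem_sigma, Finset.mem_Icc, Finset.mem_filter,
      Finset.Nat.mem_antidiagonalTuple] at hx ⊢
    obtain ⟨⟨ha1, han⟩, hq, hq1⟩ := hx
    refine ⟨?_, ?_⟩
    · rw [Fin.sum_cons, hq]
      omega
    · intro j
      refine Fin.cases ?_ ?_ j
      · simpa using ha1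
      · intro k; simpa using hq1 k
  · intro q _
    exact Fin.cons_self_tail q
  · rintro ⟨a, q⟩ _
    ext
    · simp
    · simp [Fin.tail_cons]
  · intro q _
    exact congrArg F (Fin.cons_self_tail q).symm

lemma nestedComm_ofFn_cons {E : Type*} [Ring E] (i : ℕ → E) (d : E) (a : ℕ) {p : ℕ}
    (q : Fin p → ℕ) :
    nestedComm i d (List.ofFn (Fin.cons a q))
      = i a * nestedComm i d (List.ofFn q) - nestedComm i d (List.ofFn q) * i a := by
  rw [List.ofFn_succ]
  simp only [Fin.cons_zero, Fin.cons_succ, nestedComm]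

lemma nestedComm_sum_vanish {E : Type*} [Ring E] (i : ℕ → E) (d : E)
    (hi_rel : ∀ n : ℕ, 2 ≤ n →
      ∑ j ∈ Finset.Ioo 0 n,
        (i j * (i (n - j) * d - d * i (n - j)) - (i (n - j) * d - d * i (n - j)) * i j) = 0) :
    ∀ p : ℕ, 2 ≤ p → ∀ n : ℕ,
      ∑ q ∈ (Finset.Nat.antidiagonalTuple p n).filter (fun q => ∀ j, 1 ≤ q j),
        nestedComm i d (List.ofFn q) = 0 := by
  have hT1 : ∀ m : ℕ,
      ∑ q ∈ (Finset.Nat.antidiagonalTuple 1 m).filter (fun q => ∀ j, 1 ≤ q j),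
        nestedComm i d (List.ofFn q)
      = if 1 ≤ m then i m * d - d * i m else 0 := by
    intro m
    rw [Finset.Nat.antidiagonalTuple_one, Finset.filter_singleton]
    by_cases hm : 1 ≤ m
    · rw [if_pos, if_pos hm, Finset.sum_singleton]
      · simp [nestedComm, List.ofFn_succ]
      · intro j
        have : j = 0 := Subsingleton.elim j 0
        simpa [this] using hm
    · rw [if_neg, if_neg hm, Finset.sum_empty]
      intro h
      exact hm (by simpa using h 0)
  intro p hp
  induction p, hp using Nat.le_induction with
  | base =>
    intro n
    rw [show (2 : ℕ) = 1 + 1 from rfl, sum_filter_antidiagonalTuple_succ]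
    simp only [nestedComm_ofFn_cons]
    have hstep : ∀ a : ℕ,
        ∑ q ∈ (Finset.Nat.antidiagonalTuple 1 (n - a)).filter (fun q => ∀ j, 1 ≤ q j),
          (i a * nestedComm i d (List.ofFn q) - nestedComm i d (List.ofFn q) * i a)
        = i a * (if 1 ≤ n - a then i (n - a) * d - d * i (n - a) else 0)
          - (if 1 ≤ n - a then i (n - a) * d - d * i (n - a) else 0) * i a := by
      intro a
      rw [Finset.sum_sub_distrib, ← Finset.mul_sum, ← Finset.sum_mul, hT1]
    rw [Finset.sum_congr rfl fun a _ => hstep a]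
    by_cases hn : 2 ≤ n
    · have hIcc : Finset.Icc 1 n = insert n (Finset.Ioo 0 n) := by
        ext a
        simp only [Finset.mem_Icc, Finset.mem_insert, Finset.mem_Ioo]
        omega
      rw [hIcc, Finset.sum_insert (by simp)]
      have h0 : i n * (if 1 ≤ n - n then i (n - n) * d - d * i (n - n) else 0)
          - (if 1 ≤ n - n then i (n - n) * d - d * i (n - n) else 0) * i n = 0 := by
        simp
      rw [h0, zero_add]
      rw [Finset.sum_congr rfl fun a ha => ?_]
      · exact hi_rel n hn
      · rw [Finset.mem_Ioo] at ha
        rw [if_pos (by omega)]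
    · refine Finset.sum_eq_zero fun a ha => ?_
      rw [Finset.mem_Icc] at ha
      rw [if_neg (by omega)]
      simp
  | succ p hp ih =>
    intro n
    rw [sum_filter_antidiagonalTuple_succ]
    refine Finset.sum_eq_zero fun a _ => ?_
    simp only [nestedComm_ofFn_cons]
    rw [Finset.sum_sub_distrib, ← Finset.mul_sum, ← Finset.sum_mul, ih, mul_zero, zero_mul,
      sub_zero]

end Aux

/-- In an exact commutative BV∞-algebra, setting `φₙ = iₙ` and
`Δₙ = [iₙ,d]`, the trivialization equation `e^{φ(z)} d e^{−φ(z)} = d + Σₙ Δₙ zⁿ` holds in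
`End(A)[[z]]`; equivalently (coefficientwise), for each `n ≥ 1`,
`Σ_{p=1}^{n} (1/p!) Σ_{q₁+⋯+q_p = n, qᵢ ≥ 1} [i_{q₁},…[i_{q_{p−1}},[i_{q_p},d]]…] = Δₙ`,
because all terms with `p ≥ 2` vanish by the relations `Σ_j [i_j,[i_{n−j},d]] = 0` together
with `[iₙ,iₘ] = 0`. -/
theorem exact_cbv_infinity_trivialization {A : Type*} [Ring A] [Algebra ℚ A]
    (𝒜 : ℤ → Submodule ℚ A) (hcomm : GradedComm 𝒜)
    (d : Module.End ℚ A) (hd_deg : Homog 𝒜 1 d) (hd_leib : IsDO1 𝒜 d) (hdd : d * d = 0)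
    (i : ℕ → Module.End ℚ A)
    (hi_deg : ∀ n : ℕ, 1 ≤ n → Homog 𝒜 (-(2 * (n : ℤ))) (i n))
    (hi_ord : ∀ n : ℕ, 1 ≤ n → IsDiffOp 𝒜 (n + 1) (-(2 * (n : ℤ))) (i n))
    (hi_comm : ∀ n m : ℕ, 1 ≤ n → 1 ≤ m → i n * i m - i m * i n = 0)
    (hi_rel : ∀ n : ℕ, 2 ≤ n →
      ∑ j ∈ Finset.Ioo 0 n,
        (i j * (i (n - j) * d - d * i (n - j)) - (i (n - j) * d - d * i (n - j)) * i j) = 0) :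
    ∀ n : ℕ, 1 ≤ n →
      ∑ p ∈ Finset.Icc 1 n, ((p.factorial : ℚ)⁻¹) •
        (∑ q ∈ (Finset.Nat.antidiagonalTuple p n).filter (fun q => ∀ j, 1 ≤ q j),
          nestedComm i d (List.ofFn q))
      = i n * d - d * i n := by
  intro n hn
  rw [Finset.sum_eq_single_of_mem 1 (Finset.mem_Icc.mpr ⟨le_refl 1, hn⟩)
    (fun p hp hne => ?_)]
  · rw [Finset.Nat.antidiagonalTuple_one, Finset.filter_singleton,
      if_pos (fun j => by rw [Subsingleton.elim j 0]; simpa using hn), Finset.sum_singleton]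
    simp [nestedComm, List.ofFn_succ]
  · rw [Finset.mem_Icc] at hp
    rw [nestedComm_sum_vanish i d hi_rel p (by omega) n, smul_zero]
end

section
/- Let h_C be the unique operadic homotopy on a relatively free DG operad P = O ⊔ F(C) satisfying: h_C vanishes on O, restricts to a given S-module contracting homotopy h on C, and obeys the weighted Leibniz rule h_C(x ∘ᵢ y) = (v/(v+w)) h_C(x) ∘ᵢ y + (−1)^{|x|} (w/(v+w)) x ∘ᵢ h_C(y) for weight-homogeneous x, y of weights v, w. If I ⊂ P is a DG operadic ideal generated by weight-homogeneous elements S of positive weight with h_C(S) ⊂ I, then h_C(I) ⊂ I. -/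
/-- The elements of the relatively free operad `P = O ⊔ F(C)` obtained as iterated partial
compositions of an element of `S ∪ d(S)` with weight- and degree-homogeneous elements of `P`.
(`W` is the weight grading, `Dg` the cohomological degree grading, `comp n` the partial
composition `∘ₙ`.) -/
inductive OpGen {P : Type*} [AddCommGroup P] [Module ℚ P]
    (W : ℕ → Submodule ℚ P) (Dg : ℤ → Submodule ℚ P)
    (d : P →ₗ[ℚ] P) (comp : ℕ → P →ₗ[ℚ] P →ₗ[ℚ] P) (S : Set P) : P → Prop
  | base {s : P} : s ∈ S → OpGen W Dg d comp S s
  | dgen {s : P} : s ∈ S → OpGen W Dg d comp S (d s)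
  | compLeft {n : ℕ} {x y : P} : OpGen W Dg d comp S x →
      (∃ w, y ∈ W w) → (∃ a, y ∈ Dg a) → OpGen W Dg d comp S (comp n x y)
  | compRight {n : ℕ} {x y : P} : OpGen W Dg d comp S x →
      (∃ w, y ∈ W w) → (∃ a, y ∈ Dg a) → OpGen W Dg d comp S (comp n y x)

theorem opgen_W {P : Type*} [AddCommGroup P] [Module ℚ P]
    (W : ℕ → Submodule ℚ P) (Dg : ℤ → Submodule ℚ P)
    (d : P →ₗ[ℚ] P) (comp : ℕ → P →ₗ[ℚ] P →ₗ[ℚ] P) (S : Set P)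
    (z : P) (hz : OpGen W Dg d comp S z)
    (hShomog : ∀ s ∈ S, (∃ w, 1 ≤ w ∧ s ∈ W w) ∧ (∃ a, s ∈ Dg a))
    (hdW : ∀ (w : ℕ) (x : P), x ∈ W w → d x ∈ W w)
    (hcompW : ∀ (n : ℕ) (v w : ℕ) (x y : P), x ∈ W v → y ∈ W w → comp n x y ∈ W (v + w)) :
    ∃ w, 1 ≤ w ∧ z ∈ W w := by
  induction hz with
  | @base s hs => exact (hShomog s hs).1
  | @dgen s hs =>
    obtain ⟨w, hw1, hw⟩ := (hShomog s hs).1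
    exact ⟨w, hw1, hdW w s hw⟩
  | @compLeft n x y hx hyW hyD ih =>
    obtain ⟨v, hv1, hv⟩ := ih
    obtain ⟨w, hw⟩ := hyW
    exact ⟨v + w, le_trans hv1 (Nat.le_add_right v w), hcompW n v w x y hv hw⟩
  | @compRight n x y hx hyW hyD ih =>
    obtain ⟨v, hv1, hv⟩ := ih
    obtain ⟨w, hw⟩ := hyW
    exact ⟨w + v, le_trans hv1 (Nat.le_add_left v w), hcompW n w v y x hw hv⟩

theorem opgen_D {P : Type*} [AddCommGroup P] [Module ℚ P]
    (W : ℕ → Submodule ℚ P) (Dg : ℤ → Submodule ℚ P)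
    (d : P →ₗ[ℚ] P) (comp : ℕ → P →ₗ[ℚ] P →ₗ[ℚ] P) (S : Set P)
    (z : P) (hz : OpGen W Dg d comp S z)
    (hShomog : ∀ s ∈ S, (∃ w, 1 ≤ w ∧ s ∈ W w) ∧ (∃ a, s ∈ Dg a))
    (hdD : ∀ (a : ℤ) (x : P), x ∈ Dg a → d x ∈ Dg (a + 1))
    (hcompD : ∀ (n : ℕ) (a b : ℤ) (x y : P), x ∈ Dg a → y ∈ Dg b → comp n x y ∈ Dg (a + b)) :
    ∃ a, z ∈ Dg a := by
  induction hz with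
  | @base s hs => exact (hShomog s hs).2
  | @dgen s hs =>
    obtain ⟨a, ha⟩ := (hShomog s hs).2
    exact ⟨a + 1, hdD a s ha⟩
  | @compLeft n x y hx hyW hyD ih =>
    obtain ⟨a, ha⟩ := ih
    obtain ⟨b, hb⟩ := hyD
    exact ⟨a + b, hcompD n a b x y ha hb⟩
  | @compRight n x y hx hyW hyD ih =>
    obtain ⟨a, ha⟩ := ih
    obtain ⟨b, hb⟩ := hyD
    exact ⟨b + a, hcompD n b a y x hb ha⟩

/-- Let `h_C` be the unique operadic homotopy on a relatively free DG operad
`P = O ⊔ F(C)` satisfying: `h_C` vanishes on `O` (the weight-`0` part), it satisfies the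
homotopy equation `d h_C + h_C d = 1 − ip` (where `p` kills positive weight), and it obeys the
weighted Leibniz rule
`h_C(x ∘ₙ y) = (v/(v+w)) h_C(x) ∘ₙ y + (−1)^{|x|} (w/(v+w)) x ∘ₙ h_C(y)`
for weight-homogeneous `x, y` of weights `v, w`.  If `I ⊆ P` is a DG operadic ideal generated
by a set `S` of weight-homogeneous elements of positive weight with `h_C(S) ⊆ I`, then
`h_C(I) ⊆ I`. -/
theorem homotopy_preserves_ideal {P : Type*} [AddCommGroup P] [Module ℚ P]
    (W : ℕ → Submodule ℚ P) (Dg : ℤ → Submodule ℚ P)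
    (d : P →ₗ[ℚ] P) (comp : ℕ → P →ₗ[ℚ] P →ₗ[ℚ] P)
    (ip hC : P →ₗ[ℚ] P)
    -- compatibility of the operad structure with the weight and degree gradings
    (hdW : ∀ (w : ℕ) (x : P), x ∈ W w → d x ∈ W w)
    (hdD : ∀ (a : ℤ) (x : P), x ∈ Dg a → d x ∈ Dg (a + 1))
    (hcompW : ∀ (n : ℕ) (v w : ℕ) (x y : P), x ∈ W v → y ∈ W w → comp n x y ∈ W (v + w))
    (hcompD : ∀ (n : ℕ) (a b : ℤ) (x y : P), x ∈ Dg a → y ∈ Dg b → comp n x y ∈ Dg (a + b))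
    -- defining properties of the operadic homotopy h_C
    (hO : ∀ x ∈ W 0, hC x = 0)
    (hhomotopy : ∀ x : P, d (hC x) + hC (d x) = x - ip x)
    (hLeibniz : ∀ (v w : ℕ) (a : ℤ) (n : ℕ) (x y : P),
        x ∈ W v → x ∈ Dg a → y ∈ W w →
        hC (comp n x y) = ((v : ℚ) / ((v : ℚ) + w)) • comp n (hC x) y
          + ((-1 : ℚ) ^ a * ((w : ℚ) / ((v : ℚ) + w))) • comp n x (hC y))
    -- the ideal I and its generating set S
    (S : Set P) (I : Submodule ℚ P)
    (hSI : S ⊆ I)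
    (hShomog : ∀ s ∈ S, (∃ w, 1 ≤ w ∧ s ∈ W w) ∧ (∃ a, s ∈ Dg a))
    (hShC : ∀ s ∈ S, hC s ∈ I)
    (hId : ∀ x ∈ I, d x ∈ I)
    (hIcompL : ∀ (n : ℕ) (x y : P), x ∈ I → comp n x y ∈ I)
    (hIcompR : ∀ (n : ℕ) (x y : P), x ∈ I → comp n y x ∈ I)
    (hIgen : ∀ x ∈ I, x ∈ Submodule.span ℚ {z : P | OpGen W Dg d comp S z})
    -- `I` is concentrated in positive weight, hence `p(I) = 0`
    (hIp : ∀ x ∈ I, ip x = 0) :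
    ∀ x ∈ I, hC x ∈ I := by
  have key : ∀ z, OpGen W Dg d comp S z → hC z ∈ I := by
    intro z hz
    have main : ∀ z, OpGen W Dg d comp S z →
        hC z ∈ I ∧ z ∈ I := by
      intro z hz
      induction hz with
      | @base s hs => exact ⟨hShC s hs, hSI hs⟩
      | @dgen s hs =>
        have hsI : s ∈ I := hSI hs
        have h1 : hC (d s) = s - ip s - d (hC s) := by
          have h := hhomotopy s
          have := eq_sub_of_add_eq' h
          exact this
        constructor
        · rw [h1, hIp s hsI, sub_zero]
          exact Submodule.sub_mem I hsI (hId _ (hShC s hs))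
        · exact hId s hsI
      | @compLeft n x y hx hyW hyD ih =>
        obtain ⟨hhCx, hxI⟩ := ih
        obtain ⟨w, hyw⟩ := hyW
        obtain ⟨v, _, hxv⟩ := opgen_W W Dg d comp S x hx hShomog hdW hcompW
        obtain ⟨a, hxa⟩ := opgen_D W Dg d comp S x hx hShomog hdD hcompD
        constructor
        · rw [hLeibniz v w a n x y hxv hxa hyw]
          exact Submodule.add_mem I
            (Submodule.smul_mem I _ (hIcompL n _ y hhCx))
            (Submodule.smul_mem I _ (hIcompL n x _ hxI))
        · exact hIcompL n x y hxI
      | @compRight n x y hx hyW hyD ih =>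
        obtain ⟨hhCx, hxI⟩ := ih
        obtain ⟨w, hyw⟩ := hyW
        obtain ⟨a, hya⟩ := hyD
        obtain ⟨v, _, hxv⟩ := opgen_W W Dg d comp S x hx hShomog hdW hcompW
        constructor
        · rw [hLeibniz w v a n y x hyw hya hxv]
          exact Submodule.add_mem I
            (Submodule.smul_mem I _ (hIcompR n x _ hxI))
            (Submodule.smul_mem I _ (hIcompR n _ y hhCx))
        · exact hIcompR n x y hxI
    exact (main z hz).1
  intro x hxI
  have hspan := hIgen x hxI
  have hle : Submodule.span ℚ {z : P | OpGen W Dg d comp S z} ≤ Submodule.comap hC I := by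
    rw [Submodule.span_le]
    intro z hz
    exact key z hz
  exact hle hspan
end

section
/- In the setting of the previous statement, if I ⊂ P = O ⊔ F(C) is a DG operadic ideal generated by weight-homogeneous elements of positive weight that is preserved by the contracting homotopy h_C, then I is acyclic (has trivial cohomology), and consequently the composite O ↪ P ↠ P/I is a quasi-isomorphism of DG operads. -/
/-- Let `P = O ⊔ F(C)` be a relatively free DG operad equipped with the
operadic strong deformation retraction `(O, P, i, p, h_C)` — `i` the coproduct inclusion onto
the weight-`0` part `O = W 0`, `p` the projection killing positive weights, and `h_C` the
contracting homotopy with `d h_C + h_C d = 1 − ip`.  If `I ⊆ P` is a DG operadic ideal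
generated by weight-homogeneous elements of positive weight (so `p(I) = 0`) that is preserved
by `h_C`, then `I` is acyclic (has trivial cohomology), and consequently the composite
`O ↪ P ↠ P/I` is a quasi-isomorphism of DG operads: every `d`-cocycle of `P/I` is cohomologous
to the class of a cocycle of `O`, and a cocycle of `O` mapping to a coboundary of `P/I` is a
coboundary in `O`. -/
theorem ideal_acyclic_and_quasi_iso {P : Type*} [AddCommGroup P] [Module ℚ P]
    (W : ℕ → Submodule ℚ P)
    (d : P →ₗ[ℚ] P) (comp : ℕ → P →ₗ[ℚ] P →ₗ[ℚ] P)
    (ip hC : P →ₗ[ℚ] P)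
    (hdd : ∀ x : P, d (d x) = 0)
    -- `O = W 0` is a subcomplex and `ip` is a chain projection onto it
    (hdW0 : ∀ x ∈ W 0, d x ∈ W 0)
    (hipW0 : ∀ x : P, ip x ∈ W 0)
    (hipO : ∀ x ∈ W 0, ip x = x)
    (hipchain : ∀ x : P, d (ip x) = ip (d x))
    (hhomotopy : ∀ x : P, d (hC x) + hC (d x) = x - ip x)
    -- the DG operadic ideal `I`
    (I : Submodule ℚ P)
    (hId : ∀ x ∈ I, d x ∈ I)
    (hIcompL : ∀ (n : ℕ) (x y : P), x ∈ I → comp n x y ∈ I)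
    (hIcompR : ∀ (n : ℕ) (x y : P), x ∈ I → comp n y x ∈ I)
    -- `I` is concentrated in positive weight, hence killed by `p`
    (hIp : ∀ x ∈ I, ip x = 0)
    -- `I` is preserved by the contracting homotopy
    (hIhC : ∀ x ∈ I, hC x ∈ I) :
    -- `I` is acyclic
    (∀ x ∈ I, d x = 0 → ∃ y ∈ I, d y = x) ∧
    -- `O → P/I` is surjective on cohomology
    (∀ x : P, d x ∈ I → ∃ o ∈ W 0, d o = 0 ∧ ∃ y : P, x - o - d y ∈ I) ∧
    -- `O → P/I` is injective on cohomology
    (∀ o ∈ W 0, d o = 0 → (∃ y : P, ∃ z ∈ I, o = d y + z) → ∃ u ∈ W 0, d u = o) := by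
  refine ⟨?_, ?_, ?_⟩
  · intro x hx hdx
    refine ⟨hC x, hIhC x hx, ?_⟩
    have h := hhomotopy x
    rw [hdx, map_zero, add_zero, hIp x hx, sub_zero] at h
    exact h
  · intro x hdx
    refine ⟨ip x, hipW0 x, ?_, hC x, ?_⟩
    · rw [hipchain, hIp _ hdx]
    · have h := hhomotopy x
      have : x - ip x - d (hC x) = hC (d x) := by
        rw [← h]; abel
      rw [this]
      exact hIhC _ hdx
  · intro o ho hdo ⟨y, z, hz, hoyz⟩
    refine ⟨ip y, hipW0 y, ?_⟩
    have : ip o = ip (d y) + ip z := by rw [hoyz, map_add]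
    rw [hipO o ho, hIp z hz, add_zero, ← hipchain] at this
    exact this.symm
end
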